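/- Linear-Boltzmann moment formulas (Lemma 5.1, LB case): let N ≥ 1, let E : ℝ → ℝ^N be continuous and bounded, let s ≤ t, and let f ∈ L¹(ℝ^N) with ∫ |v| |f(v)| dv < ∞. Define f_{s,t}(v) = e^{-(t-s)} f(v − ∫_s^t E(r) dr) + ρ(f) ∫_s^t e^{-(t-σ)} M(v − ∫_σ^t E(r) dr) dσ. Then f_{s,t} ∈ L¹(ℝ^N), ρ(f_{s,t}) = ρ(f), and J(f_{s,t}) = e^{-(t-s)} J(f) + ρ(f) ∫_s^t e^{-(t-σ)} E(σ) dσ. -/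

import Mathlib

/-! Both terms of the Duhamel formula are superpositions of translates: `f` shifted by
`∫_s^t E`, and the Maxwellian shifted by `∫_σ^t E` with weight `e^{-(t-σ)}`. A translation by `c`
preserves mass and adds `c ρ` to the first moment (the Maxwellian, being even, has none of its
own), and Fubini lets one integrate the superposition over `σ` term by term. Mass conservation
is then `e^{-(t-s)} + ∫_s^t e^{-(t-σ)} = 1`, and the first moment follows by integrating
`∫_s^t e^{-(t-σ)} ∫_σ^t E` by parts. -/

open MeasureTheory

/-- The standard Gaussian (Maxwellian) density on `ℝ^N`. -/
noncomputable def gaussM (N : ℕ) (v : EuclideanSpace ℝ (Fin N)) : ℝ :=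
  (2 * Real.pi) ^ (-(N : ℝ) / 2) * Real.exp (-‖v‖ ^ 2 / 2)

open Real

section Translation

variable {V : Type*} [NormedAddCommGroup V] [NormedSpace ℝ V] [MeasurableSpace V] [BorelSpace V]
  {μ : Measure V} {g : V → ℝ} (ℓ : V →L[ℝ] ℝ)

lemma integrable_clm_mul (hg : Integrable g μ) (hg1 : Integrable (fun v => ‖v‖ * |g v|) μ) :
    Integrable (fun v => ℓ v * g v) μ :=
  (hg1.const_mul ‖ℓ‖).mono' (ℓ.continuous.aestronglyMeasurable.mul hg.1) <|
    .of_forall fun v => by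
      rw [norm_mul, Real.norm_eq_abs (g v), ← mul_assoc]
      exact mul_le_mul_of_nonneg_right (ℓ.le_opNorm v) (abs_nonneg _)

lemma integral_clm_mul_eq_zero_of_even [μ.IsNegInvariant] (hg : ∀ v, g (-v) = g v) :
    ∫ v, ℓ v * g v ∂μ = 0 := by
  have h := integral_neg_eq_self (fun v => ℓ v * g v) μ
  simp only [map_neg, hg, neg_mul, integral_neg] at h
  linarith

variable [μ.IsAddRightInvariant] (c : V)

lemma integrable_clm_mul_comp_sub (hg : Integrable g μ)
    (hg1 : Integrable (fun v => ‖v‖ * |g v|) μ) :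
    Integrable (fun v => ℓ v * g (v - c)) μ :=
  (((integrable_clm_mul ℓ hg hg1).add (hg.const_mul (ℓ c))).comp_sub_right c).congr <|
    .of_forall fun v => by simp only [Pi.add_apply, map_sub]; ring

lemma integral_clm_mul_comp_sub (hg : Integrable g μ)
    (hg1 : Integrable (fun v => ‖v‖ * |g v|) μ) :
    ∫ v, ℓ v * g (v - c) ∂μ = ∫ v, ℓ v * g v ∂μ + ℓ c * ∫ v, g v ∂μ := by
  have h := integral_sub_right_eq_self (μ := μ) (fun v => ℓ v * g v + ℓ c * g v) c
  simp only [map_sub, sub_mul, sub_add_cancel] at h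
  rw [h, integral_add (integrable_clm_mul ℓ hg hg1) (hg.const_mul _), integral_const_mul]

lemma integral_abs_clm_mul_comp_sub_le (hg : Integrable g μ)
    (hg1 : Integrable (fun v => ‖v‖ * |g v|) μ) :
    ∫ v, |ℓ v * g (v - c)| ∂μ ≤ ‖ℓ‖ * (∫ v, ‖v‖ * |g v| ∂μ + ‖c‖ * ∫ v, |g v| ∂μ) := by
  have hbound : Integrable (fun v => ‖ℓ‖ * (‖v‖ * |g v| + ‖c‖ * |g v|)) μ :=
    (hg1.add (hg.abs.const_mul _)).const_mul _
  calc ∫ v, |ℓ v * g (v - c)| ∂μ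
      ≤ ∫ v, ‖ℓ‖ * (‖v - c‖ * |g (v - c)| + ‖c‖ * |g (v - c)|) ∂μ := by
        refine integral_mono_of_nonneg (.of_forall fun v => abs_nonneg _)
          (hbound.comp_sub_right c) (.of_forall fun v => ?_)
        have hv : ‖v‖ ≤ ‖v - c‖ + ‖c‖ := norm_le_norm_sub_add v c
        dsimp only
        rw [abs_mul, ← add_mul, ← mul_assoc]
        exact mul_le_mul_of_nonneg_right ((ℓ.le_opNorm v).trans (by gcongr)) (abs_nonneg _)
    _ = ‖ℓ‖ * (∫ v, ‖v‖ * |g v| ∂μ + ‖c‖ * ∫ v, |g v| ∂μ) := by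
        rw [integral_sub_right_eq_self (fun v => ‖ℓ‖ * (‖v‖ * |g v| + ‖c‖ * |g v|)) c,
          integral_const_mul, integral_add hg1 (hg.abs.const_mul _), integral_const_mul]

end Translation

section Mixture

variable {V : Type*} [NormedAddCommGroup V] [MeasurableSpace V] [BorelSpace V]
  [SecondCountableTopology V] {μ : Measure V} [μ.IsAddRightInvariant] [SFinite μ] {g : V → ℝ}
  {X : Type*} [MeasurableSpace X] {ν : Measure X} {k : X → ℝ} {A : X → V}

lemma integrable_prod_mul_comp_sub (hg : Integrable g μ) (hgm : Measurable g)
    (hk : Integrable k ν) (hA : Measurable A) :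
    Integrable (fun p : X × V => k p.1 * g (p.2 - A p.1)) (ν.prod μ) := by
  have hm : AEStronglyMeasurable (fun p : X × V => k p.1 * g (p.2 - A p.1)) (ν.prod μ) :=
    hk.1.comp_fst.mul (hgm.comp (measurable_snd.sub (hA.comp measurable_fst))).aestronglyMeasurable
  refine (integrable_prod_iff hm).2
    ⟨.of_forall fun σ => (hg.comp_sub_right (A σ)).const_mul (k σ), ?_⟩
  refine (hk.norm.mul_const (∫ v, ‖g v‖ ∂μ)).congr (.of_forall fun σ => ?_)
  simp only [norm_mul, integral_const_mul, integral_sub_right_eq_self (fun v => ‖g v‖)]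

variable [NormedSpace ℝ V]

lemma integrable_prod_mul_clm_mul_comp_sub (ℓ : V →L[ℝ] ℝ) (hg : Integrable g μ)
    (hg1 : Integrable (fun v => ‖v‖ * |g v|) μ) (hgm : Measurable g)
    (hk : Integrable k ν) (hkA : Integrable (fun σ => k σ * ‖A σ‖) ν) (hA : Measurable A) :
    Integrable (fun p : X × V => k p.1 * (ℓ p.2 * g (p.2 - A p.1))) (ν.prod μ) := by
  have hm : AEStronglyMeasurable (fun p : X × V => k p.1 * (ℓ p.2 * g (p.2 - A p.1)))
      (ν.prod μ) :=
    hk.1.comp_fst.mul ((ℓ.measurable.comp measurable_snd).mul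
      (hgm.comp (measurable_snd.sub (hA.comp measurable_fst)))).aestronglyMeasurable
  refine (integrable_prod_iff hm).2
    ⟨.of_forall fun σ => (integrable_clm_mul_comp_sub ℓ (A σ) hg hg1).const_mul (k σ), ?_⟩
  set M₀ := ∫ v, |g v| ∂μ
  set M₁ := ∫ v, ‖v‖ * |g v| ∂μ
  refine ((hk.norm.mul_const (‖ℓ‖ * M₁)).add (hkA.norm.mul_const (‖ℓ‖ * M₀))).mono'
    hm.norm.integral_prod_right' (.of_forall fun σ => ?_)
  have hbound := integral_abs_clm_mul_comp_sub_le ℓ (A σ) hg hg1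
  calc ‖∫ v, ‖k σ * (ℓ v * g (v - A σ))‖ ∂μ‖ = |k σ| * ∫ v, |ℓ v * g (v - A σ)| ∂μ := by
        simp only [norm_mul (k σ), Real.norm_eq_abs, integral_const_mul, abs_mul (|k σ|),
          abs_abs, abs_of_nonneg (integral_nonneg fun _ => abs_nonneg _)]
    _ ≤ |k σ| * (‖ℓ‖ * (M₁ + ‖A σ‖ * M₀)) :=
        mul_le_mul_of_nonneg_left hbound (abs_nonneg _)
    _ = _ := by simp only [Pi.add_apply, norm_mul, Real.norm_eq_abs, abs_norm]; ring

end Mixture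

section IntervalMixture

variable {V : Type*} [NormedAddCommGroup V] [MeasurableSpace V] [BorelSpace V]
  [SecondCountableTopology V] {μ : Measure V} [μ.IsAddRightInvariant] [SFinite μ] {g : V → ℝ}
  {k : ℝ → ℝ} {A : ℝ → V} {a b : ℝ}

lemma integrable_intervalIntegral_mul_comp_sub (hg : Integrable g μ) (hgm : Measurable g)
    (hk : IntervalIntegrable k volume a b) (hA : Measurable A) :
    Integrable (fun v => ∫ σ in a..b, k σ * g (v - A σ)) μ := by
  simp_rw [intervalIntegral.intervalIntegral_eq_integral_uIoc, smul_eq_mul]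
  exact ((integrable_prod_mul_comp_sub hg hgm (intervalIntegrable_iff.1 hk) hA).integral_prod_right
    ).const_mul _

lemma integral_intervalIntegral_mul_comp_sub (hg : Integrable g μ) (hgm : Measurable g)
    (hk : IntervalIntegrable k volume a b) (hA : Measurable A) :
    ∫ v, (∫ σ in a..b, k σ * g (v - A σ)) ∂μ = (∫ σ in a..b, k σ) * ∫ v, g v ∂μ := by
  rw [← intervalIntegral_integral_swap
    (integrable_prod_mul_comp_sub hg hgm (intervalIntegrable_iff.1 hk) hA)]
  simp_rw [integral_const_mul, integral_sub_right_eq_self g]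
  exact intervalIntegral.integral_mul_const _ _

variable [NormedSpace ℝ V]

lemma integrable_clm_mul_intervalIntegral_mul_comp_sub (ℓ : V →L[ℝ] ℝ) (hg : Integrable g μ)
    (hg1 : Integrable (fun v => ‖v‖ * |g v|) μ) (hgm : Measurable g)
    (hk : IntervalIntegrable k volume a b)
    (hkA : IntervalIntegrable (fun σ => k σ * ‖A σ‖) volume a b) (hA : Measurable A) :
    Integrable (fun v => ℓ v * ∫ σ in a..b, k σ * g (v - A σ)) μ := by
  simp_rw [← intervalIntegral.integral_const_mul, mul_left_comm (ℓ _) (k _),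
    intervalIntegral.intervalIntegral_eq_integral_uIoc, smul_eq_mul]
  exact ((integrable_prod_mul_clm_mul_comp_sub ℓ hg hg1 hgm (intervalIntegrable_iff.1 hk)
    (intervalIntegrable_iff.1 hkA) hA).integral_prod_right).const_mul _

lemma integral_clm_mul_intervalIntegral_mul_comp_sub (ℓ : V →L[ℝ] ℝ) (hg : Integrable g μ)
    (hg1 : Integrable (fun v => ‖v‖ * |g v|) μ) (hgm : Measurable g)
    (hk : IntervalIntegrable k volume a b)
    (hkA : IntervalIntegrable (fun σ => k σ * ‖A σ‖) volume a b) (hA : Measurable A) :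
    ∫ v, ℓ v * (∫ σ in a..b, k σ * g (v - A σ)) ∂μ
      = ∫ σ in a..b, k σ * (∫ v, ℓ v * g v ∂μ + ℓ (A σ) * ∫ v, g v ∂μ) := by
  simp_rw [← intervalIntegral.integral_const_mul, mul_left_comm (ℓ _) (k _)]
  rw [← intervalIntegral_integral_swap (integrable_prod_mul_clm_mul_comp_sub ℓ hg hg1 hgm
    (intervalIntegrable_iff.1 hk) (intervalIntegrable_iff.1 hkA) hA)]
  simp_rw [integral_const_mul, integral_clm_mul_comp_sub ℓ _ hg hg1]

end IntervalMixture

section Gaussian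

lemma integrable_exp_neg_mul_sq_norm {V : Type*} [NormedAddCommGroup V] [InnerProductSpace ℝ V]
    [FiniteDimensional ℝ V] [MeasurableSpace V] [BorelSpace V] {b : ℝ} (hb : 0 < b) :
    Integrable (fun v : V => exp (-b * ‖v‖ ^ 2)) := by
  refine (GaussianFourier.integrable_cexp_neg_mul_sq_norm_add (V := V) (b := b)
    (by simpa using hb) 0 0).norm.congr (.of_forall fun v => ?_)
  simp only [zero_mul, add_zero, Complex.norm_exp]
  norm_cast

lemma mul_exp_neg_sq_div_two_le (x : ℝ) : x * exp (-x ^ 2 / 2) ≤ exp (-x ^ 2 / 4) := by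
  have hx : x ≤ exp (x ^ 2 / 4) := by
    nlinarith [add_one_le_exp (x ^ 2 / 4), sq_nonneg (x / 2 - 1)]
  calc x * exp (-x ^ 2 / 2) ≤ exp (x ^ 2 / 4) * exp (-x ^ 2 / 2) :=
        mul_le_mul_of_nonneg_right hx (exp_nonneg _)
    _ = exp (-x ^ 2 / 4) := by rw [← exp_add]; ring_nf

variable {N : ℕ}

lemma gaussM_nonneg (v : EuclideanSpace ℝ (Fin N)) : 0 ≤ gaussM N v := by
  unfold gaussM; positivity

lemma gaussM_neg (v : EuclideanSpace ℝ (Fin N)) : gaussM N (-v) = gaussM N v := by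
  rw [gaussM, gaussM, norm_neg]

lemma continuous_gaussM : Continuous (gaussM N) := by
  unfold gaussM; fun_prop

lemma integrable_gaussM : Integrable (gaussM N) :=
  ((integrable_exp_neg_mul_sq_norm (by norm_num : (0 : ℝ) < 1 / 2)).const_mul
    ((2 * π) ^ (-(N : ℝ) / 2))).congr <|
    .of_forall fun v => by rw [gaussM]; ring_nf

lemma integrable_norm_mul_abs_gaussM :
    Integrable (fun v : EuclideanSpace ℝ (Fin N) => ‖v‖ * |gaussM N v|) := by
  refine ((integrable_exp_neg_mul_sq_norm (by norm_num : (0 : ℝ) < 1 / 4)).const_mul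
    ((2 * π) ^ (-(N : ℝ) / 2))).mono'
    (continuous_norm.mul continuous_gaussM.abs).aestronglyMeasurable (.of_forall fun v => ?_)
  rw [norm_mul, norm_norm, Real.norm_eq_abs, abs_abs, abs_of_nonneg (gaussM_nonneg v), gaussM,
    mul_left_comm]
  refine mul_le_mul_of_nonneg_left ((mul_exp_neg_sq_div_two_le ‖v‖).trans_eq ?_) (by positivity)
  ring_nf

lemma integral_gaussM : ∫ v : EuclideanSpace ℝ (Fin N), gaussM N v = 1 := by
  have h : ∀ v : EuclideanSpace ℝ (Fin N), exp (-‖v‖ ^ 2 / 2) = exp (-(1 / 2) * ‖v‖ ^ 2) :=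
    fun v => by ring_nf
  simp_rw [gaussM, integral_const_mul, h]
  rw [GaussianFourier.integral_rexp_neg_mul_sq_norm (by norm_num : (0 : ℝ) < 1 / 2),
    finrank_euclideanSpace_fin, show π / (1 / 2) = 2 * π by ring, ← rpow_add (by positivity),
    neg_div, neg_add_cancel, rpow_zero]

variable {k : ℝ → ℝ} {A : ℝ → EuclideanSpace ℝ (Fin N)} {a b : ℝ}

lemma integral_intervalIntegral_mul_gaussM_sub (hk : IntervalIntegrable k volume a b)
    (hA : Measurable A) :
    ∫ v, (∫ σ in a..b, k σ * gaussM N (v - A σ)) = ∫ σ in a..b, k σ := by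
  rw [integral_intervalIntegral_mul_comp_sub integrable_gaussM continuous_gaussM.measurable hk hA,
    integral_gaussM, mul_one]

lemma integral_clm_mul_intervalIntegral_mul_gaussM_sub (ℓ : EuclideanSpace ℝ (Fin N) →L[ℝ] ℝ)
    (hk : IntervalIntegrable k volume a b)
    (hkA : IntervalIntegrable (fun σ => k σ * ‖A σ‖) volume a b) (hA : Measurable A) :
    ∫ v, ℓ v * (∫ σ in a..b, k σ * gaussM N (v - A σ)) = ∫ σ in a..b, k σ * ℓ (A σ) := by
  rw [integral_clm_mul_intervalIntegral_mul_comp_sub ℓ integrable_gaussM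
    integrable_norm_mul_abs_gaussM continuous_gaussM.measurable hk hkA hA,
    integral_clm_mul_eq_zero_of_even ℓ gaussM_neg, integral_gaussM]
  simp only [zero_add, mul_one]

end Gaussian

section ExponentialWeight

lemma hasDerivAt_exp_neg_sub (t σ : ℝ) :
    HasDerivAt (fun σ => exp (-(t - σ))) (exp (-(t - σ))) σ := by
  simpa using ((hasDerivAt_id σ).const_sub t).neg.exp

lemma integral_exp_neg_sub (s t : ℝ) : ∫ σ in s..t, exp (-(t - σ)) = 1 - exp (-(t - s)) := by
  rw [intervalIntegral.integral_eq_sub_of_hasDerivAt (fun σ _ => hasDerivAt_exp_neg_sub t σ)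
    ((by fun_prop : Continuous fun σ => exp (-(t - σ))).intervalIntegrable s t)]
  simp

lemma continuous_intervalIntegral_left {F : Type*} [NormedAddCommGroup F] [NormedSpace ℝ F]
    {e : ℝ → F} (he : Continuous e) (t : ℝ) : Continuous fun σ => ∫ r in σ..t, e r :=
  (intervalIntegral.continuous_primitive (fun _ _ => he.intervalIntegrable _ _) t).neg.congr
    fun σ => (intervalIntegral.integral_symm t σ).symm

lemma integral_exp_neg_sub_mul_intervalIntegral {e : ℝ → ℝ} (he : Continuous e) (s t : ℝ) :
    ∫ σ in s..t, exp (-(t - σ)) * ∫ r in σ..t, e r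
      = (∫ σ in s..t, exp (-(t - σ)) * e σ) - exp (-(t - s)) * ∫ r in s..t, e r := by
  have hparts := intervalIntegral.integral_mul_deriv_eq_deriv_mul
    (u := fun σ => ∫ r in σ..t, e r) (v := fun σ => exp (-(t - σ)))
    (fun σ _ => intervalIntegral.integral_hasDerivAt_left (he.intervalIntegrable σ t)
      he.stronglyMeasurable.stronglyMeasurableAtFilter he.continuousAt)
    (fun σ _ => hasDerivAt_exp_neg_sub t σ) (he.neg.intervalIntegrable s t)
    ((by fun_prop : Continuous fun σ => exp (-(t - σ))).intervalIntegrable s t)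
  simp only [intervalIntegral.integral_same, zero_mul, zero_sub, neg_mul,
    intervalIntegral.integral_neg, sub_neg_eq_add] at hparts
  simp_rw [mul_comm (exp _)] at hparts ⊢
  linarith

end ExponentialWeight

theorem LB_moments_general (N : ℕ)
    (E : ℝ → EuclideanSpace ℝ (Fin N)) (hEc : Continuous E)
    (s t : ℝ)
    (f : EuclideanSpace ℝ (Fin N) → ℝ) (hf : Integrable f)
    (hf1 : Integrable (fun v : EuclideanSpace ℝ (Fin N) => ‖v‖ * |f v|))
    (fst : EuclideanSpace ℝ (Fin N) → ℝ)
    (hfst : ∀ v, fst v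
      = Real.exp (-(t - s)) * f (v - ∫ r in s..t, E r)
        + (∫ v' : EuclideanSpace ℝ (Fin N), f v')
          * ∫ σ in s..t, Real.exp (-(t - σ)) * gaussM N (v - ∫ r in σ..t, E r)) :
    Integrable fst ∧
    ((∫ v : EuclideanSpace ℝ (Fin N), fst v) = ∫ v : EuclideanSpace ℝ (Fin N), f v) ∧
    (∀ i : Fin N, (∫ v : EuclideanSpace ℝ (Fin N), v i * fst v)
      = Real.exp (-(t - s)) * (∫ v : EuclideanSpace ℝ (Fin N), v i * f v)
        + (∫ v : EuclideanSpace ℝ (Fin N), f v)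
          * ∫ σ in s..t, Real.exp (-(t - σ)) * E σ i) := by
  obtain rfl : fst = _ := funext hfst
  set a := ∫ r in s..t, E r
  set ρ := ∫ v, f v
  have hAc := continuous_intervalIntegral_left hEc t
  have hk : IntervalIntegrable (fun σ => exp (-(t - σ))) volume s t :=
    Continuous.intervalIntegrable (by fun_prop) s t
  have hkA : IntervalIntegrable (fun σ => exp (-(t - σ)) * ‖∫ r in σ..t, E r‖) volume s t :=
    Continuous.intervalIntegrable (by fun_prop) s t
  have hIf := hf.comp_sub_right a
  have hIG := integrable_intervalIntegral_mul_comp_sub integrable_gaussM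
    continuous_gaussM.measurable hk hAc.measurable
  refine ⟨(hIf.const_mul _).add (hIG.const_mul _), ?_, fun i => ?_⟩
  · rw [integral_add (hIf.const_mul _) (hIG.const_mul _), integral_const_mul, integral_const_mul,
      integral_sub_right_eq_self, integral_intervalIntegral_mul_gaussM_sub hk hAc.measurable,
      integral_exp_neg_sub]
    ring
  · have hEi : ∀ σ, (∫ r in σ..t, E r) i = ∫ r in σ..t, E r i := fun σ =>
      ((EuclideanSpace.proj i).intervalIntegral_comp_comm (hEc.intervalIntegrable σ t)).symm
    have hJf := integral_clm_mul_comp_sub (EuclideanSpace.proj i) a hf hf1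
    have hIf := integrable_clm_mul_comp_sub (EuclideanSpace.proj i) a hf hf1
    have hJG := integral_clm_mul_intervalIntegral_mul_gaussM_sub (EuclideanSpace.proj i)
      hk hkA hAc.measurable
    have hIG := integrable_clm_mul_intervalIntegral_mul_comp_sub (EuclideanSpace.proj i)
      integrable_gaussM integrable_norm_mul_abs_gaussM continuous_gaussM.measurable hk hkA
      hAc.measurable
    simp only [PiLp.proj_apply, hEi] at hJG hIG hJf hIf
    simp_rw [mul_add, mul_left_comm _ (exp _), mul_left_comm _ ρ]
    rw [integral_add (hIf.const_mul _) (hIG.const_mul _), integral_const_mul, integral_const_mul,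
      hJG, hJf, integral_exp_neg_sub_mul_intervalIntegral (by fun_prop) s t, ← hEi]
    ring

/-- Linear-Boltzmann moment formulas (Lemma 5.1, LB case): the Duhamel solution
`f_{s,t}` of the linear Boltzmann equation driven by `E` is integrable, mass is conserved,
and `J(f_{s,t}) = e^{-(t-s)} J(f) + ρ(f) ∫_s^t e^{-(t-σ)} E(σ) dσ`. -/
theorem LB_moments (N : ℕ) (hN : 1 ≤ N)
    (E : ℝ → EuclideanSpace ℝ (Fin N)) (hEc : Continuous E)
    (R : ℝ) (hEb : ∀ r, ‖E r‖ ≤ R)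
    (s t : ℝ) (hst : s ≤ t)
    (f : EuclideanSpace ℝ (Fin N) → ℝ) (hf : Integrable f)
    (hf1 : Integrable (fun v : EuclideanSpace ℝ (Fin N) => ‖v‖ * |f v|))
    (fst : EuclideanSpace ℝ (Fin N) → ℝ)
    (hfst : ∀ v, fst v
      = Real.exp (-(t - s)) * f (v - ∫ r in s..t, E r)
        + (∫ v' : EuclideanSpace ℝ (Fin N), f v')
          * ∫ σ in s..t, Real.exp (-(t - σ)) * gaussM N (v - ∫ r in σ..t, E r)) :
    Integrable fst ∧
    ((∫ v : EuclideanSpace ℝ (Fin N), fst v) = ∫ v : EuclideanSpace ℝ (Fin N), f v) ∧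
    (∀ i : Fin N, (∫ v : EuclideanSpace ℝ (Fin N), v i * fst v)
      = Real.exp (-(t - s)) * (∫ v : EuclideanSpace ℝ (Fin N), v i * f v)
        + (∫ v : EuclideanSpace ℝ (Fin N), f v)
          * ∫ σ in s..t, Real.exp (-(t - σ)) * E σ i) :=
  LB_moments_general N E hEc s t f hf hf1 fst hfst
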